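/- arXiv:1811.00913 — 7 statements merged into one kernel-verified Lean document; each statement's English description precedes it below -/
import Mathlib

section
/- Specker's lemma on Cayley graphs. Let G be a group and S a finite subset of G generating G (Subgroup.closure S = G). Then for every subset A of G the following are equivalent: (i) the set {(g,s) ∈ G × S : exactly one of g and g·s belongs to A} is finite (i.e. the coboundary of A in the Cayley graph X(G,S) is finite); (ii) for every g ∈ G, the symmetric difference A ∆ Ag is finite, where Ag = {ag : a ∈ A}. In other words, B(X(G,S)) = B(G). -/
/-!
For a group `M` acting on `α`, the elements `g` with `A ∆ gA` finite form a subgroup, since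
`A ∆ ghA ⊆ (A ∆ gA) ∪ g(A ∆ hA)` and `A ∆ g⁻¹A = g⁻¹(gA ∆ A)`. For the right action of `G` on
itself, the coboundary of `A` in `X(G,S)` is the disjoint union over `s ∈ S` of the sets
`A ∆ As⁻¹`, so it is finite iff `S` lies in this subgroup, i.e. iff the subgroup is all of `G`.
-/

open scoped symmDiff Pointwise

namespace MulAction

variable (M : Type*) {α : Type*} [Group M] [MulAction M α]

def almostStabilizer (A : Set α) : Subgroup M where
  carrier := {g | (A ∆ (g • A)).Finite}
  one_mem' := by simp
  mul_mem' {g h} hg hh := by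
    have hsub : A ∆ ((g * h) • A) ⊆ A ∆ (g • A) ∪ g • (A ∆ (h • A)) := by
      rw [Set.smul_set_symmDiff, mul_smul]
      exact symmDiff_triangle _ _ _
    exact (Set.Finite.union hg hh.smul_set).subset hsub
  inv_mem' {g} hg := by
    have heq : A ∆ (g⁻¹ • A) = g⁻¹ • (A ∆ (g • A)) := by
      rw [Set.smul_set_symmDiff, inv_smul_smul, symmDiff_comm]
    show (A ∆ (g⁻¹ • A)).Finite
    rw [heq]
    exact hg.smul_set

variable {M}

theorem mem_almostStabilizer_iff {A : Set α} {g : M} :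
    g ∈ almostStabilizer M A ↔ (A ∆ (g • A)).Finite := Iff.rfl

end MulAction

theorem Finset.finite_setOf_mem_and_iff {α β : Type*} (T : Finset β)
    (p : α → β → Prop) :
    {q : α × β | q.2 ∈ T ∧ p q.1 q.2}.Finite ↔ ∀ b ∈ T, {a | p a b}.Finite := by
  refine ⟨fun hC b hb => ?_, fun hfib => ?_⟩
  · have hinj : Function.Injective fun a : α => (a, b) := fun _ _ h => (Prod.mk.inj h).1
    exact (hC.preimage hinj.injOn).subset fun a ha => ⟨hb, ha⟩
  · refine (T.finite_toSet.biUnion fun b hb => (hfib b hb).image fun a => (a, b)).subset ?_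
    rintro ⟨a, b⟩ ⟨hb, hab⟩
    exact Set.mem_biUnion hb ⟨a, hab, rfl⟩

open MulOpposite MulAction

section RightAction

variable {G : Type*} [Group G]

def rightAlmostStabilizer (A : Set G) : Subgroup G :=
  (almostStabilizer Gᵐᵒᵖ A).unop

theorem mem_rightAlmostStabilizer_iff {A : Set G} {g : G} :
    g ∈ rightAlmostStabilizer A ↔ (A ∆ ((· * g) '' A)).Finite := by
  simp only [rightAlmostStabilizer, Subgroup.mem_unop, mem_almostStabilizer_iff, ← Set.image_smul,
    op_smul_eq_mul]

theorem setOf_xor_mem_mul_eq (A : Set G) (s : G) :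
    {g | Xor (g ∈ A) (g * s ∈ A)} = A ∆ ((· * s⁻¹) '' A) := by
  rw [Set.image_mul_right, inv_inv]
  rfl

end RightAction

/-- **Specker's lemma on Cayley graphs:** for a finite generating set `S` of `G`,
a subset `A ⊆ G` has finite coboundary in the Cayley graph `X(G,S)` if and only if
`A` is almost right `G`-stable; that is, `B(X(G,S)) = B(G)`. -/
theorem specker_cayley {G : Type*} [Group G] (S : Finset G)
    (hS : Subgroup.closure (S : Set G) = ⊤) (A : Set G) :
    {p : G × G | p.2 ∈ S ∧ Xor' (p.1 ∈ A) (p.1 * p.2 ∈ A)}.Finite ↔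
      ∀ g : G, (symmDiff A ((fun a => a * g) '' A)).Finite := by
  refine (Finset.finite_setOf_mem_and_iff S fun g s => Xor (g ∈ A) (g * s ∈ A)).trans ?_
  simp only [setOf_xor_mem_mul_eq, ← mem_rightAlmostStabilizer_iff, inv_mem_iff]
  rw [← Subgroup.eq_top_iff', ← top_le_iff, ← hS, Subgroup.closure_le]
  rfl
end

section
/- Dunwoody's tree construction (existence and distance formula). Let V be a set and let 𝓔 be a nonempty collection of subsets of V such that: ∅ ∉ 𝓔; 𝓔 is complement-stable (e ∈ 𝓔 implies eᶜ ∈ 𝓔); 𝓔 is nested (for all e, f ∈ 𝓔, at least one of e∩f, e∩fᶜ, eᶜ∩f, eᶜ∩fᶜ is empty); and 𝓔 is finitely separating (for all v, w ∈ V the symmetric difference of {d ∈ 𝓔 : v ∈ d} and {d ∈ 𝓔 : w ∈ d} is finite). For e ∈ 𝓔 set ι(e) = {d ∈ 𝓔 : e ⊆ d or eᶜ ⊊ d} and τ(e) = {e, eᶜ}. Let T(𝓔) be the simple graph whose vertex set is {ι(e) : e ∈ 𝓔} ∪ {τ(e) : e ∈ 𝓔} (a set of subsets of the powerset of V) and in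 which x and y are adjacent if and only if there exists e ∈ 𝓔 with {x,y} = {ι(e), τ(e)}. Then T(𝓔) is a tree (connected and acyclic), and for all e, f ∈ 𝓔 the graph distance in T(𝓔) between ι(e) and ι(f) equals the cardinality of the symmetric difference ι(e) ∆ ι(f). -/
/-- `ι(e) = {d ∈ 𝓔 : e ⊆ d or eᶜ ⊊ d}`. -/
def dunwoodyIota {V : Type*} (𝓔 : Set (Set V)) (e : Set V) : Set (Set V) :=
  {d ∈ 𝓔 | e ⊆ d ∨ eᶜ ⊂ d}

/-- `τ(e) = {e, eᶜ}`. -/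
def dunwoodyTau {V : Type*} (e : Set V) : Set (Set V) :=
  {e, eᶜ}

/-!
Each edge `ι g — τ g` toggles exactly the element `g` of a potential on the vertices (`ι e` on
`ι e`, and `ι e ∩ ι eᶜ = ι e \ {e}` on `τ e`), and different edges toggle different elements.
Along a trail the potential therefore changes by one new element per edge: there are no cycles,
and a shortest path from `ι e` to `ι f` has length `|ι e ∆ ι f|`. For connectivity, a
`⊆`-minimal element `g` of the finite set `ι e \ ι f` satisfies `ι g = ι e`, and the path
`ι e — τ g — ι gᶜ` removes `g` and `gᶜ` from the symmetric difference.
-/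

open scoped symmDiff

namespace SimpleGraph

variable {α β : Type*} {G : SimpleGraph α}

structure IsTogglePotential (G : SimpleGraph α) (μ : α → Set β) : Prop where
  encard_symmDiff_eq_one : ∀ ⦃x y⦄, G.Adj x y → (μ x ∆ μ y).encard = 1
  eq_of_not_disjoint : ∀ ⦃x y x' y'⦄, G.Adj x y → G.Adj x' y' →
    ¬Disjoint (μ x ∆ μ y) (μ x' ∆ μ y') → s(x, y) = s(x', y')

namespace IsTogglePotential

variable {μ : α → Set β} (hμ : G.IsTogglePotential μ)
include hμ

theorem disjoint_biUnion_darts {u w v : α} (h : G.Adj u w) (q : G.Walk w v)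
    (hq : s(u, w) ∉ q.edges) :
    Disjoint (μ u ∆ μ w) (⋃ d ∈ q.darts, μ d.fst ∆ μ d.snd) := by
  refine Set.disjoint_iUnion₂_right.mpr fun d hd => by_contra fun hnd => hq ?_
  rw [hμ.eq_of_not_disjoint h d.adj hnd, Walk.edges_eq_map_darts]
  exact List.mem_map_of_mem hd

theorem symmDiff_eq_biUnion_darts {u v : α} {p : G.Walk u v} (hp : p.IsTrail) :
    μ u ∆ μ v = ⋃ d ∈ p.darts, μ d.fst ∆ μ d.snd := by
  induction p with
  | nil => simp
  | @cons u w v h q ih =>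
    rw [Walk.isTrail_cons] at hp
    rw [← symmDiff_symmDiff_cancel_left (μ w) (μ v), ← symmDiff_assoc, ih hp.1,
      (hμ.disjoint_biUnion_darts h q hp.2).symmDiff_eq_sup, Walk.darts_cons]
    simp [Set.iUnion_or, Set.iUnion_union_distrib]

theorem encard_symmDiff_eq_length {u v : α} {p : G.Walk u v} (hp : p.IsTrail) :
    (μ u ∆ μ v).encard = p.length := by
  induction p with
  | nil => simp
  | @cons u w v h q ih =>
    rw [Walk.isTrail_cons] at hp
    have hdisj := hμ.disjoint_biUnion_darts h q hp.2
    rw [← hμ.symmDiff_eq_biUnion_darts hp.1] at hdisj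
    rw [← symmDiff_symmDiff_cancel_left (μ w) (μ v), ← symmDiff_assoc, hdisj.symmDiff_eq_sup]
    change (μ u ∆ μ w ∪ μ w ∆ μ v).encard = _
    rw [Set.encard_union_eq hdisj, hμ.encard_symmDiff_eq_one h, ih hp.1,
      Walk.length_cons, Nat.cast_succ, add_comm]

theorem isAcyclic : G.IsAcyclic := fun v c hc => by
  have h := hμ.encard_symmDiff_eq_length hc.isTrail
  rw [symmDiff_self, Set.bot_eq_empty, Set.encard_empty, eq_comm, Nat.cast_eq_zero] at h
  exact hc.not_nil (Walk.length_eq_zero_iff.mp h)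

theorem dist_eq_ncard_symmDiff {u v : α} (h : G.Reachable u v) :
    G.dist u v = (μ u ∆ μ v).ncard := by
  obtain ⟨p, hp, hlen⟩ := h.exists_path_of_dist
  rw [Set.ncard_def, hμ.encard_symmDiff_eq_length hp.isTrail, ENat.toNat_natCast, hlen]

end IsTogglePotential

end SimpleGraph

namespace Dunwoody

variable {V : Type*} {𝓔 : Set (Set V)} {d e f g : Set V}

theorem self_mem_dunwoodyIota (he : e ∈ 𝓔) : e ∈ dunwoodyIota 𝓔 e :=
  ⟨he, Or.inl subset_rfl⟩

theorem mem_dunwoodyIota_of_subset (hd : d ∈ dunwoodyIota 𝓔 e) (hdg : d ⊆ g) (hg : g ∈ 𝓔) :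
    g ∈ dunwoodyIota 𝓔 e :=
  ⟨hg, hd.2.imp (·.trans hdg) (·.trans_subset hdg)⟩

theorem mem_or_mem_of_mem_dunwoodyIota (hd : d ∈ dunwoodyIota 𝓔 e) {a b : V} (ha : a ∈ e)
    (hb : b ∉ e) : a ∈ d ∨ b ∈ d :=
  hd.2.imp (· ha) (·.subset hb)

theorem dunwoodyTau_compl (e : Set V) : dunwoodyTau eᶜ = dunwoodyTau e := by
  rw [dunwoodyTau, dunwoodyTau, compl_compl, Set.pair_comm]

variable (𝓔) in
def FinitelySeparating : Prop :=
  ∀ v w : V, (symmDiff {d ∈ 𝓔 | v ∈ d} {d ∈ 𝓔 | w ∈ d}).Finite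

variable (𝓔) in
structure IsNestedSystem : Prop where
  empty_notMem : ∅ ∉ 𝓔
  compl_mem : ∀ e ∈ 𝓔, eᶜ ∈ 𝓔
  nested : ∀ e ∈ 𝓔, ∀ f ∈ 𝓔, e ∩ f = ∅ ∨ e ∩ fᶜ = ∅ ∨ eᶜ ∩ f = ∅ ∨ eᶜ ∩ fᶜ = ∅

namespace IsNestedSystem

variable (h𝓔 : IsNestedSystem 𝓔)
include h𝓔

theorem nonempty (he : e ∈ 𝓔) : e.Nonempty :=
  Set.nonempty_iff_ne_empty.mpr fun h => h𝓔.empty_notMem (h ▸ he)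

theorem compl_nonempty (he : e ∈ 𝓔) : eᶜ.Nonempty :=
  h𝓔.nonempty (h𝓔.compl_mem e he)

theorem subset_cases (he : e ∈ 𝓔) (hf : f ∈ 𝓔) : e ⊆ fᶜ ∨ e ⊆ f ∨ f ⊆ e ∨ eᶜ ⊆ f := by
  rcases h𝓔.nested e he f hf with h | h | h | h
  · exact Or.inl (Set.subset_compl_iff_disjoint_right.mpr (Set.disjoint_iff_inter_eq_empty.mpr h))
  · exact Or.inr (Or.inl (Set.sdiff_eq_empty.mp h))
  · exact Or.inr (Or.inr (Or.inl (Set.sdiff_eq_empty.mp (by rwa [Set.inter_comm] at h))))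
  · exact Or.inr (Or.inr (Or.inr (Set.sdiff_eq_empty.mp h)))

theorem compl_notMem_dunwoodyIota (he : e ∈ 𝓔) (hd : d ∈ dunwoodyIota 𝓔 e) :
    dᶜ ∉ dunwoodyIota 𝓔 e := by
  obtain ⟨a, ha⟩ := h𝓔.nonempty he
  obtain ⟨b, hb⟩ := h𝓔.compl_nonempty he
  rintro ⟨-, h₂ | h₂⟩ <;> rcases hd.2 with h₁ | h₁
  · exact h₂ ha (h₁ ha)
  · exact h₁.not_subset (Set.subset_compl_comm.mp h₂)
  · exact (compl_lt_compl_iff_lt.mp h₂).not_subset h₁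
  · exact h₂.subset hb (h₁.subset hb)

theorem mem_or_compl_mem_dunwoodyIota (he : e ∈ 𝓔) (hd : d ∈ 𝓔) :
    d ∈ dunwoodyIota 𝓔 e ∨ dᶜ ∈ dunwoodyIota 𝓔 e := by
  have hdc := h𝓔.compl_mem d hd
  rcases h𝓔.subset_cases he hd with h | h | h | h
  · exact Or.inr ⟨hdc, Or.inl h⟩
  · exact Or.inl ⟨hd, Or.inl h⟩
  · rcases h.eq_or_ssubset with rfl | hss
    · exact Or.inl (self_mem_dunwoodyIota hd)
    · exact Or.inr ⟨hdc, Or.inr (compl_lt_compl_iff_lt.mpr hss)⟩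
  · rcases h.eq_or_ssubset with rfl | hss
    · exact Or.inr (by simpa using self_mem_dunwoodyIota he)
    · exact Or.inl ⟨hd, Or.inr hss⟩

theorem dunwoodyIota_eq_of_subset (he : e ∈ 𝓔) (hg : g ∈ 𝓔)
    (h : dunwoodyIota 𝓔 e ⊆ dunwoodyIota 𝓔 g) : dunwoodyIota 𝓔 e = dunwoodyIota 𝓔 g := by
  refine h.antisymm fun d hd => by_contra fun hde => ?_
  have hdc := (h𝓔.mem_or_compl_mem_dunwoodyIota he hd.1).resolve_left hde
  exact h𝓔.compl_notMem_dunwoodyIota hg hd (h hdc)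

theorem dunwoodyIota_sdiff_dunwoodyIota_compl (he : e ∈ 𝓔) :
    dunwoodyIota 𝓔 e \ dunwoodyIota 𝓔 eᶜ = {e} := by
  ext d
  constructor
  · rintro ⟨⟨hd, h | h⟩, hn⟩
    · refine by_contra fun hde => hn ⟨hd, Or.inr ?_⟩
      rw [compl_compl]
      exact h.ssubset_of_ne (Ne.symm hde)
    · exact absurd ⟨hd, Or.inl h.subset⟩ hn
  · rintro rfl
    have hec := h𝓔.compl_mem d he
    refine ⟨self_mem_dunwoodyIota he, fun h => ?_⟩
    exact h𝓔.compl_notMem_dunwoodyIota hec (self_mem_dunwoodyIota hec) (by rwa [compl_compl])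

theorem symmDiff_dunwoodyIota_dunwoodyIota_compl (he : e ∈ 𝓔) :
    dunwoodyIota 𝓔 e ∆ dunwoodyIota 𝓔 eᶜ = {e, eᶜ} := by
  have h := h𝓔.dunwoodyIota_sdiff_dunwoodyIota_compl (h𝓔.compl_mem e he)
  rw [compl_compl] at h
  rw [Set.symmDiff_def, h𝓔.dunwoodyIota_sdiff_dunwoodyIota_compl he, h, Set.singleton_union]

theorem dunwoodyIota_ne_dunwoodyTau (he : e ∈ 𝓔) (f : Set V) :
    dunwoodyIota 𝓔 e ≠ dunwoodyTau f := fun h =>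
  h𝓔.compl_notMem_dunwoodyIota (d := f) he (h ▸ Set.mem_insert f {fᶜ})
    (h ▸ Set.mem_insert_of_mem f rfl)

theorem dunwoodyIota_eq_of_minimal (he : e ∈ 𝓔) (hg : g ∈ dunwoodyIota 𝓔 e)
    (hmin : ∀ d ∈ dunwoodyIota 𝓔 e, d ⊆ g → d = g) :
    dunwoodyIota 𝓔 g = dunwoodyIota 𝓔 e := by
  refine (h𝓔.dunwoodyIota_eq_of_subset he hg.1 fun d hd => ?_).symm
  rcases h𝓔.subset_cases hd.1 hg.1 with h | h | h | h
  · exact absurd (mem_dunwoodyIota_of_subset hg (Set.subset_compl_comm.mp h)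
      (h𝓔.compl_mem d hd.1)) (h𝓔.compl_notMem_dunwoodyIota he hd)
  · exact hmin d hd h ▸ self_mem_dunwoodyIota hd.1
  · exact ⟨hd.1, Or.inl h⟩
  · rcases (Set.compl_subset_comm.mp h).eq_or_ssubset with heq | hss
    · exact absurd (heq ▸ hd) (h𝓔.compl_notMem_dunwoodyIota he hg)
    · exact ⟨hd.1, Or.inr hss⟩

variable (hsep : FinitelySeparating 𝓔)
include hsep

theorem finite_dunwoodyIota_sdiff (he : e ∈ 𝓔) (hf : f ∈ 𝓔) :
    (dunwoodyIota 𝓔 e \ dunwoodyIota 𝓔 f).Finite := by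
  obtain ⟨a, ha⟩ := h𝓔.nonempty he
  obtain ⟨b, hb⟩ := h𝓔.compl_nonempty he
  obtain ⟨c, hc⟩ := h𝓔.nonempty hf
  obtain ⟨k, hk⟩ := h𝓔.compl_nonempty hf
  -- every `d ∈ ι e \ ι f` contains `a` or `b` and misses `c` or `k`
  have hsep' (v w : V) : ({d ∈ 𝓔 | v ∈ d} \ {d ∈ 𝓔 | w ∈ d}).Finite :=
    (hsep v w).subset fun _ hd => Set.mem_symmDiff.mpr (Or.inl hd)
  refine (((hsep' a c).union (hsep' a k)).union ((hsep' b c).union (hsep' b k))).subset ?_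
  rintro d ⟨hde, hdf⟩
  have hdc := (h𝓔.mem_or_compl_mem_dunwoodyIota hf hde.1).resolve_left hdf
  have h₁ := mem_or_mem_of_mem_dunwoodyIota hde ha hb
  have h₂ := mem_or_mem_of_mem_dunwoodyIota hdc hc hk
  have hd := hde.1
  simp only [Set.mem_union, Set.mem_sdiff, Set.mem_ofPred_eq, Set.mem_compl_iff] at h₂ ⊢
  tauto

theorem finite_symmDiff_dunwoodyIota (he : e ∈ 𝓔) (hf : f ∈ 𝓔) :
    (dunwoodyIota 𝓔 e ∆ dunwoodyIota 𝓔 f).Finite := by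
  rw [Set.symmDiff_def]
  exact (h𝓔.finite_dunwoodyIota_sdiff hsep he hf).union (h𝓔.finite_dunwoodyIota_sdiff hsep hf he)

theorem exists_mem_dunwoodyIota_sdiff_eq (he : e ∈ 𝓔) (hf : f ∈ 𝓔)
    (hne : dunwoodyIota 𝓔 e ≠ dunwoodyIota 𝓔 f) :
    ∃ g ∈ dunwoodyIota 𝓔 e, g ∉ dunwoodyIota 𝓔 f ∧ dunwoodyIota 𝓔 g = dunwoodyIota 𝓔 e := by
  have hS : (dunwoodyIota 𝓔 e \ dunwoodyIota 𝓔 f).Nonempty := Set.nonempty_iff_ne_empty.mpr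
    fun h => hne (h𝓔.dunwoodyIota_eq_of_subset he hf (Set.sdiff_eq_empty.mp h))
  obtain ⟨g, hg⟩ := (h𝓔.finite_dunwoodyIota_sdiff hsep he hf).exists_minimal hS
  refine ⟨g, hg.prop.1, hg.prop.2, h𝓔.dunwoodyIota_eq_of_minimal he hg.prop.1 fun d hd hdg => ?_⟩
  exact hg.eq_of_le ⟨hd, fun hdf => hg.prop.2 (mem_dunwoodyIota_of_subset hdf hdg hg.prop.1.1)⟩ hdg

theorem ncard_symmDiff_dunwoodyIota_compl_lt (he : e ∈ 𝓔) (hf : f ∈ 𝓔)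
    (hg : g ∈ dunwoodyIota 𝓔 e) (hgf : g ∉ dunwoodyIota 𝓔 f)
    (hge : dunwoodyIota 𝓔 g = dunwoodyIota 𝓔 e) :
    (dunwoodyIota 𝓔 gᶜ ∆ dunwoodyIota 𝓔 f).ncard < (dunwoodyIota 𝓔 e ∆ dunwoodyIota 𝓔 f).ncard := by
  have hpair : {g, gᶜ} ⊆ dunwoodyIota 𝓔 e ∆ dunwoodyIota 𝓔 f := by
    rintro d (rfl | rfl)
    · exact Or.inl ⟨hg, hgf⟩
    · exact Or.inr ⟨(h𝓔.mem_or_compl_mem_dunwoodyIota hf hg.1).resolve_left hgf,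
        h𝓔.compl_notMem_dunwoodyIota he hg⟩
  have h : dunwoodyIota 𝓔 gᶜ ∆ dunwoodyIota 𝓔 f =
      (dunwoodyIota 𝓔 e ∆ dunwoodyIota 𝓔 f) \ {g, gᶜ} := by
    rw [← symmDiff_of_le hpair, ← h𝓔.symmDiff_dunwoodyIota_dunwoodyIota_compl hg.1, hge,
      symmDiff_assoc, symmDiff_left_comm, symmDiff_symmDiff_cancel_left]
  rw [h]
  exact Set.ncard_lt_ncard (hpair.sdiff_ssubset_of_nonempty (Set.insert_nonempty _ _))
    (h𝓔.finite_symmDiff_dunwoodyIota hsep he hf)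

end IsNestedSystem

variable (𝓔) in
abbrev DunwoodyVertex : Type _ :=
  {x : Set (Set V) // (∃ e ∈ 𝓔, x = dunwoodyIota 𝓔 e) ∨ ∃ e ∈ 𝓔, x = dunwoodyTau e}

def DunwoodyVertex.iota (he : e ∈ 𝓔) : DunwoodyVertex 𝓔 :=
  ⟨dunwoodyIota 𝓔 e, Or.inl ⟨e, he, rfl⟩⟩

def DunwoodyVertex.tau (he : e ∈ 𝓔) : DunwoodyVertex 𝓔 :=
  ⟨dunwoodyTau e, Or.inr ⟨e, he, rfl⟩⟩

variable (𝓔) in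
def dunwoodyGraph : SimpleGraph (DunwoodyVertex 𝓔) :=
  SimpleGraph.fromRel fun x y => ∃ e ∈ 𝓔,
    ({x.1, y.1} : Set (Set (Set V))) = {dunwoodyIota 𝓔 e, dunwoodyTau e}

variable (𝓔) in
open Classical in
noncomputable def dunwoodyPotential (x : Set (Set V)) : Set (Set V) :=
  if ∃ e ∈ 𝓔, x = dunwoodyTau e then ⋂ h ∈ x, dunwoodyIota 𝓔 h else x

theorem dunwoodyPotential_tau (he : e ∈ 𝓔) :
    dunwoodyPotential 𝓔 (dunwoodyTau e) = dunwoodyIota 𝓔 e ∩ dunwoodyIota 𝓔 eᶜ := by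
  rw [dunwoodyPotential, if_pos ⟨e, he, rfl⟩, dunwoodyTau, Set.biInter_pair]

namespace IsNestedSystem

variable (h𝓔 : IsNestedSystem 𝓔)
include h𝓔

theorem dunwoodyPotential_iota (he : e ∈ 𝓔) :
    dunwoodyPotential 𝓔 (dunwoodyIota 𝓔 e) = dunwoodyIota 𝓔 e :=
  if_neg fun ⟨_, _, h⟩ => h𝓔.dunwoodyIota_ne_dunwoodyTau he _ h

theorem symmDiff_dunwoodyPotential_iota_tau (he : e ∈ 𝓔) :
    dunwoodyPotential 𝓔 (dunwoodyIota 𝓔 e) ∆ dunwoodyPotential 𝓔 (dunwoodyTau e) = {e} := by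
  rw [h𝓔.dunwoodyPotential_iota he, dunwoodyPotential_tau he, symmDiff_comm,
    symmDiff_of_le Set.inter_subset_left, Set.sdiff_self_inter,
    h𝓔.dunwoodyIota_sdiff_dunwoodyIota_compl he]

theorem dunwoodyGraph_adj {x y : DunwoodyVertex 𝓔} :
    (dunwoodyGraph 𝓔).Adj x y ↔
      ∃ e ∈ 𝓔, ({x.1, y.1} : Set (Set (Set V))) = {dunwoodyIota 𝓔 e, dunwoodyTau e} := by
  rw [dunwoodyGraph, SimpleGraph.fromRel_adj]
  refine ⟨fun ⟨_, h⟩ => h.elim id fun ⟨e, he, h⟩ => ⟨e, he, Set.pair_comm y.1 x.1 ▸ h⟩,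
    fun ⟨e, he, h⟩ => ⟨?_, Or.inl ⟨e, he, h⟩⟩⟩
  rintro rfl
  obtain ⟨h₁, h₂⟩ | ⟨h₁, h₂⟩ := Set.pair_eq_pair_iff.mp h
  · exact h𝓔.dunwoodyIota_ne_dunwoodyTau he e (h₁.symm.trans h₂)
  · exact h𝓔.dunwoodyIota_ne_dunwoodyTau he e (h₂.symm.trans h₁)

theorem dunwoodyGraph_adj_iota_tau (he : e ∈ 𝓔) :
    (dunwoodyGraph 𝓔).Adj (.iota he) (.tau he) :=
  h𝓔.dunwoodyGraph_adj.mpr ⟨e, he, rfl⟩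

theorem exists_symmDiff_dunwoodyPotential_eq_singleton {x y : DunwoodyVertex 𝓔}
    (hxy : (dunwoodyGraph 𝓔).Adj x y) :
    ∃ e ∈ 𝓔, ({x.1, y.1} : Set (Set (Set V))) = {dunwoodyIota 𝓔 e, dunwoodyTau e} ∧
      dunwoodyPotential 𝓔 x.1 ∆ dunwoodyPotential 𝓔 y.1 = {e} := by
  obtain ⟨e, he, h⟩ := h𝓔.dunwoodyGraph_adj.mp hxy
  refine ⟨e, he, h, ?_⟩
  obtain ⟨hx, hy⟩ | ⟨hx, hy⟩ := Set.pair_eq_pair_iff.mp h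
  · rw [hx, hy, h𝓔.symmDiff_dunwoodyPotential_iota_tau he]
  · rw [hx, hy, symmDiff_comm, h𝓔.symmDiff_dunwoodyPotential_iota_tau he]

theorem isTogglePotential_dunwoodyPotential :
    (dunwoodyGraph 𝓔).IsTogglePotential fun x => dunwoodyPotential 𝓔 x.1 where
  encard_symmDiff_eq_one x y hxy := by
    obtain ⟨e, -, -, h⟩ := h𝓔.exists_symmDiff_dunwoodyPotential_eq_singleton hxy
    rw [h, Set.encard_singleton]
  eq_of_not_disjoint x y x' y' hxy hxy' hnd := by
    obtain ⟨e, -, he, h⟩ := h𝓔.exists_symmDiff_dunwoodyPotential_eq_singleton hxy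
    obtain ⟨e', -, he', h'⟩ := h𝓔.exists_symmDiff_dunwoodyPotential_eq_singleton hxy'
    rw [h, h', Set.disjoint_singleton, not_not] at hnd
    subst hnd
    exact Sym2.eq_iff.mpr (by
      simpa only [Subtype.ext_iff] using Set.pair_eq_pair_iff.mp (he.trans he'.symm))

variable (hsep : FinitelySeparating 𝓔)
include hsep

theorem dunwoodyGraph_reachable_iota_iota (he : e ∈ 𝓔) (hf : f ∈ 𝓔) :
    (dunwoodyGraph 𝓔).Reachable (.iota he) (.iota hf) := by
  induction hn : (dunwoodyIota 𝓔 e ∆ dunwoodyIota 𝓔 f).ncard using Nat.strong_induction_on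
    generalizing e with
  | _ n ih =>
  by_cases heq : dunwoodyIota 𝓔 e = dunwoodyIota 𝓔 f
  · exact (Subtype.ext heq : DunwoodyVertex.iota he = .iota hf) ▸ .refl _
  obtain ⟨g, hg, hgf, hge⟩ := h𝓔.exists_mem_dunwoodyIota_sdiff_eq hsep he hf heq
  have hgc := h𝓔.compl_mem g hg.1
  have hvg : DunwoodyVertex.iota he = .iota hg.1 := Subtype.ext hge.symm
  have hvgc : DunwoodyVertex.tau hg.1 = .tau hgc := Subtype.ext (dunwoodyTau_compl g).symm
  have hrest := ih _ (hn ▸ h𝓔.ncard_symmDiff_dunwoodyIota_compl_lt hsep he hf hg hgf hge) hgc rfl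
  rw [hvg]
  exact (h𝓔.dunwoodyGraph_adj_iota_tau hg.1).reachable.trans
    (hvgc ▸ (h𝓔.dunwoodyGraph_adj_iota_tau hgc).reachable.symm.trans hrest)

theorem dunwoodyGraph_connected (hne : 𝓔.Nonempty) : (dunwoodyGraph 𝓔).Connected := by
  have hreach (x : DunwoodyVertex 𝓔) : ∃ e, ∃ he : e ∈ 𝓔,
      (dunwoodyGraph 𝓔).Reachable x (.iota he) := by
    obtain ⟨e, he, hx⟩ | ⟨e, he, hx⟩ := x.2
    · exact ⟨e, he, (Subtype.ext hx : x = .iota he) ▸ .refl _⟩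
    · exact ⟨e, he,
        (Subtype.ext hx : x = .tau he) ▸ (h𝓔.dunwoodyGraph_adj_iota_tau he).reachable.symm⟩
  obtain ⟨e₀, he₀⟩ := hne
  refine (SimpleGraph.connected_iff_exists_forall_reachable _).mpr ⟨.iota he₀, fun x => ?_⟩
  obtain ⟨e, he, hx⟩ := hreach x
  exact (h𝓔.dunwoodyGraph_reachable_iota_iota hsep he₀ he).trans hx.symm

theorem dist_dunwoodyGraph_iota_iota (he : e ∈ 𝓔) (hf : f ∈ 𝓔) :
    (dunwoodyGraph 𝓔).dist (.iota he) (.iota hf) =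
      (dunwoodyIota 𝓔 e ∆ dunwoodyIota 𝓔 f).ncard := by
  rw [h𝓔.isTogglePotential_dunwoodyPotential.dist_eq_ncard_symmDiff
      (h𝓔.dunwoodyGraph_reachable_iota_iota hsep he hf),
    DunwoodyVertex.iota, DunwoodyVertex.iota, h𝓔.dunwoodyPotential_iota he,
    h𝓔.dunwoodyPotential_iota hf]

end IsNestedSystem

end Dunwoody

/-- **Dunwoody's tree construction (existence and distance formula).** -/
theorem dunwoody_tree {V : Type*} (𝓔 : Set (Set V))
    (hne : 𝓔.Nonempty) (hempty : ∅ ∉ 𝓔)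
    (hcompl : ∀ e ∈ 𝓔, eᶜ ∈ 𝓔)
    (hnested : ∀ e ∈ 𝓔, ∀ f ∈ 𝓔,
      e ∩ f = ∅ ∨ e ∩ fᶜ = ∅ ∨ eᶜ ∩ f = ∅ ∨ eᶜ ∩ fᶜ = ∅)
    (hsep : ∀ v w : V, (symmDiff {d ∈ 𝓔 | v ∈ d} {d ∈ 𝓔 | w ∈ d}).Finite) :
    ∃ T : SimpleGraph {x : Set (Set V) //
        (∃ e ∈ 𝓔, x = dunwoodyIota 𝓔 e) ∨ ∃ e ∈ 𝓔, x = dunwoodyTau e},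
      (∀ x y, T.Adj x y ↔ ∃ e ∈ 𝓔,
        ({x.1, y.1} : Set (Set (Set V))) = {dunwoodyIota 𝓔 e, dunwoodyTau e}) ∧
      T.IsTree ∧
      ∀ e (he : e ∈ 𝓔) f (hf : f ∈ 𝓔),
        T.dist ⟨dunwoodyIota 𝓔 e, Or.inl ⟨e, he, rfl⟩⟩
            ⟨dunwoodyIota 𝓔 f, Or.inl ⟨f, hf, rfl⟩⟩ =
          (symmDiff (dunwoodyIota 𝓔 e) (dunwoodyIota 𝓔 f)).ncard := by
  have h𝓔 : Dunwoody.IsNestedSystem 𝓔 := ⟨hempty, hcompl, hnested⟩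
  refine ⟨Dunwoody.dunwoodyGraph 𝓔, fun _ _ => h𝓔.dunwoodyGraph_adj,
    ⟨h𝓔.dunwoodyGraph_connected hsep hne, h𝓔.isTogglePotential_dunwoodyPotential.isAcyclic⟩,
    fun _ he _ hf => h𝓔.dist_dunwoodyGraph_iota_iota hsep he hf⟩
end

section
/- Dunwoody's tree construction (natural map from V). Let V be a set and let 𝓔 be a nonempty collection of subsets of V such that: ∅ ∉ 𝓔; 𝓔 is complement-stable; 𝓔 is nested; and 𝓔 is finitely separating. For e ∈ 𝓔 set ι(e) = {d ∈ 𝓔 : e ⊆ d or eᶜ ⊊ d}. Then for every v ∈ V: (1) the set v** ∩ 𝓔 := {d ∈ 𝓔 : v ∈ d} has a ⊆-minimal element; and (2) for every ⊆-minimal element e of v** ∩ 𝓔 one has v** ∩ 𝓔 = ι(e). -/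
namespace Dunwoody

variable {V : Type*} {𝓔 : Set (Set V)} {v w : V} {e d : Set V}

lemma exists_mem_of_compl_mem (hne : 𝓔.Nonempty) (hcompl : ∀ e ∈ 𝓔, eᶜ ∈ 𝓔) (v : V) :
    ∃ e ∈ 𝓔, v ∈ e := by
  obtain ⟨a, ha⟩ := hne
  by_cases hva : v ∈ a
  · exact ⟨a, ha, hva⟩
  · exact ⟨aᶜ, hcompl a ha, hva⟩

lemma finite_setOf_mem_subset_of_notMem
    (hsep : (symmDiff {d ∈ 𝓔 | v ∈ d} {d ∈ 𝓔 | w ∈ d}).Finite) (hw : w ∉ e) :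
    {d ∈ 𝓔 | v ∈ d ∧ d ⊆ e}.Finite :=
  hsep.subset fun _ ⟨hd, hvd, hde⟩ => Or.inl ⟨⟨hd, hvd⟩, fun h => hw (hde h.2)⟩

lemma exists_minimal_of_finite_setOf_subset (he : e ∈ 𝓔) (hve : v ∈ e)
    (hfin : {d ∈ 𝓔 | v ∈ d ∧ d ⊆ e}.Finite) :
    ∃ e ∈ 𝓔, v ∈ e ∧ ∀ d ∈ 𝓔, v ∈ d → d ⊆ e → d = e := by
  obtain ⟨m, hme, hmin⟩ := hfin.isPWO.exists_le_minimal ⟨he, hve, subset_rfl⟩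
  obtain ⟨hm, hvm, -⟩ := hmin.prop
  exact ⟨m, hm, hvm, fun d hd hvd hdm => hmin.eq_of_le ⟨hd, hvd, hdm.trans hme⟩ hdm⟩

theorem exists_minimal_mem (hne : 𝓔.Nonempty) (hempty : ∅ ∉ 𝓔) (hcompl : ∀ e ∈ 𝓔, eᶜ ∈ 𝓔)
    (hsep : ∀ v w : V, (symmDiff {d ∈ 𝓔 | v ∈ d} {d ∈ 𝓔 | w ∈ d}).Finite) (v : V) :
    ∃ e ∈ 𝓔, v ∈ e ∧ ∀ d ∈ 𝓔, v ∈ d → d ⊆ e → d = e := by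
  obtain ⟨e, he, hve⟩ := exists_mem_of_compl_mem hne hcompl v
  obtain ⟨w, hw⟩ : eᶜ.Nonempty :=
    Set.nonempty_iff_ne_empty.2 fun h => hempty (h ▸ hcompl e he)
  exact exists_minimal_of_finite_setOf_subset he hve
    (finite_setOf_mem_subset_of_notMem (hsep v w) hw)

lemma mem_dunwoodyIota_of_mem
    (hnested : ∀ e ∈ 𝓔, ∀ f ∈ 𝓔, e ∩ f = ∅ ∨ e ∩ fᶜ = ∅ ∨ eᶜ ∩ f = ∅ ∨ eᶜ ∩ fᶜ = ∅)
    (he : e ∈ 𝓔) (hve : v ∈ e) (hmin : ∀ d ∈ 𝓔, v ∈ d → d ⊆ e → d = e)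
    (hd : d ∈ 𝓔) (hvd : v ∈ d) : d ∈ dunwoodyIota 𝓔 e := by
  refine ⟨hd, ?_⟩
  rcases hnested e he d hd with h | h | h | h
  · exact absurd h (Set.nonempty_iff_ne_empty.1 ⟨v, hve, hvd⟩)
  · exact Or.inl (Set.sdiff_eq_empty.1 h)
  · exact Or.inl (hmin d hd hvd (Set.sdiff_eq_empty.1 ((Set.inter_comm _ _).trans h))).ge
  · exact Or.inr ⟨Set.sdiff_eq_empty.1 h, fun hde => hde hvd hve⟩

lemma mem_of_mem_dunwoodyIota (hcompl : ∀ e ∈ 𝓔, eᶜ ∈ 𝓔) (hve : v ∈ e)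
    (hmin : ∀ d ∈ 𝓔, v ∈ d → d ⊆ e → d = e) (hd : d ∈ dunwoodyIota 𝓔 e) : v ∈ d := by
  obtain ⟨hd, hed | hecd⟩ := hd
  · exact hed hve
  · by_contra hvd
    have hdc : dᶜ = e := hmin dᶜ (hcompl d hd) hvd (Set.compl_subset_comm.1 hecd.1)
    exact hecd.ne (by rw [← hdc, compl_compl])

end Dunwoody

open Dunwoody in
/-- **Dunwoody's tree construction (natural map from `V`).** For every `v ∈ V`,
the set `v** ∩ 𝓔 = {d ∈ 𝓔 : v ∈ d}` has a `⊆`-minimal element, and for every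
`⊆`-minimal element `e` of it, one has `v** ∩ 𝓔 = ι(e)`. -/
theorem dunwoody_natural_map {V : Type*} (𝓔 : Set (Set V))
    (hne : 𝓔.Nonempty) (hempty : ∅ ∉ 𝓔)
    (hcompl : ∀ e ∈ 𝓔, eᶜ ∈ 𝓔)
    (hnested : ∀ e ∈ 𝓔, ∀ f ∈ 𝓔,
      e ∩ f = ∅ ∨ e ∩ fᶜ = ∅ ∨ eᶜ ∩ f = ∅ ∨ eᶜ ∩ fᶜ = ∅)
    (hsep : ∀ v w : V, (symmDiff {d ∈ 𝓔 | v ∈ d} {d ∈ 𝓔 | w ∈ d}).Finite) :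
    ∀ v : V,
      (∃ e ∈ 𝓔, v ∈ e ∧ ∀ d ∈ 𝓔, v ∈ d → d ⊆ e → d = e) ∧
      (∀ e ∈ 𝓔, v ∈ e → (∀ d ∈ 𝓔, v ∈ d → d ⊆ e → d = e) →
        {d ∈ 𝓔 | v ∈ d} = dunwoodyIota 𝓔 e) := by
  intro v
  refine ⟨exists_minimal_mem hne hempty hcompl hsep v, fun e he hve hmin => ?_⟩
  ext d
  exact ⟨fun ⟨hd, hvd⟩ => mem_dunwoodyIota_of_mem hnested he hve hmin hd hvd,
    fun hd => ⟨hd.1, mem_of_mem_dunwoodyIota hcompl hve hmin hd⟩⟩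
end

section
/- G-finiteness of the new broken part. Let G be a group, and let E and Z be G-sets such that E is G-quasifree and some element of Map(E,Z) is stabilized by every element of G under the conjugation action. Let v₀ ∈ Map(E,Z) satisfy g·v₀ =ₐ v₀ for every g ∈ G. Let H be a subgroup of G such that rank(G rel H) < ω₀, i.e. there exists a finite subset S of G with Subgroup.closure (S ∪ H) = G. Then the set E_G − G·E_H has finitely many G-orbits, where for a subgroup K of G, E_K = {e ∈ E : the function K → Z, k ↦ ⟨k·v₀, e⟩, is not constant}, and G·E_H = {g·e : g ∈ G, e ∈ E_H}. -/
/-- For a subset `K` of `G`, `EK v₀ K` is the set of `e ∈ E` such that the function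
`K → Z`, `k ↦ ⟨k·v₀, e⟩ = k • v₀ (k⁻¹ • e)`, is not constant. -/
def EK {G E Z : Type*} [Group G] [MulAction G E] [MulAction G Z]
    (v₀ : E → Z) (K : Set G) : Set E :=
  {e : E | ∃ k₁ ∈ K, ∃ k₂ ∈ K, k₁ • v₀ (k₁⁻¹ • e) ≠ k₂ • v₀ (k₂⁻¹ • e)}

/-- **`G`-finiteness of the new broken part:** if `rank(G rel H) < ω₀`, then
`E_G − G·E_H` has finitely many `G`-orbits. -/
theorem broken_part_G_finite {G E Z : Type*} [Group G] [MulAction G E] [MulAction G Z]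
    (hE : ∀ e : E, {g : G | g • e = e}.Finite)
    (hmap : ∃ u : E → Z, ∀ (g : G) (e : E), g • u (g⁻¹ • e) = u e)
    (v₀ : E → Z)
    (hv₀ : ∀ g : G, {e : E | g • v₀ (g⁻¹ • e) ≠ v₀ e}.Finite)
    (H : Subgroup G)
    (hfg : ∃ S : Finset G, Subgroup.closure (↑S ∪ (H : Set G)) = ⊤) :
    ∃ F : Finset E,
      ∀ e ∈ EK v₀ (Set.univ : Set G) \ ⋃ g : G, (fun x => g • x) '' EK v₀ (H : Set G),
        ∃ g : G, ∃ f ∈ F, g • f = e := by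
  obtain ⟨S, hS⟩ := hfg
  have hFfin : (⋃ t ∈ (S : Set G), {x : E | t • v₀ (t⁻¹ • x) ≠ v₀ x}).Finite :=
    Set.Finite.biUnion S.finite_toSet (fun t _ => hv₀ t)
  set D : Set E := (⋃ t ∈ (S : Set G), {x : E | t • v₀ (t⁻¹ • x) ≠ v₀ x}) ∪
      EK v₀ (H : Set G) with hD
  have good : ∀ g : G, ∀ e : E, g • v₀ (g⁻¹ • e) ≠ v₀ e → ∃ w : G, w⁻¹ • e ∈ D := by
    intro g
    have hg : g ∈ Subgroup.closure ((S : Set G) ∪ H) := hS ▸ Subgroup.mem_top g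
    induction hg using Subgroup.closure_induction with
    | mem t ht =>
      intro e he
      refine ⟨1, ?_⟩
      simp only [inv_one, one_smul]
      rcases ht with ht | ht
      · exact Or.inl (Set.mem_biUnion ht he)
      · exact Or.inr ⟨t, ht, 1, H.one_mem, by simpa using he⟩
    | one => intro e he; simp at he
    | mul g₁ g₂ _ _ ih₁ ih₂ =>
      intro e he
      by_cases h1 : g₁ • v₀ (g₁⁻¹ • e) = v₀ e
      · have h2 : g₂ • v₀ (g₂⁻¹ • g₁⁻¹ • e) ≠ v₀ (g₁⁻¹ • e) := by
          intro hc
          apply he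
          calc (g₁ * g₂) • v₀ ((g₁ * g₂)⁻¹ • e)
              = g₁ • g₂ • v₀ (g₂⁻¹ • g₁⁻¹ • e) := by
                rw [mul_inv_rev, mul_smul, mul_smul]
            _ = g₁ • v₀ (g₁⁻¹ • e) := by rw [hc]
            _ = v₀ e := h1
        obtain ⟨w, hw⟩ := ih₂ (g₁⁻¹ • e) h2
        exact ⟨g₁ * w, by simpa [mul_inv_rev, mul_smul] using hw⟩
      · exact ih₁ e h1
    | inv g _ ih =>
      intro e he
      have h2 : g • v₀ (g⁻¹ • g • e) ≠ v₀ (g • e) := by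
        intro hc
        apply he
        rw [inv_inv]
        have := congrArg (g⁻¹ • ·) hc
        simp only [inv_smul_smul, smul_inv_smul] at this ⊢
        simpa using this.symm
      obtain ⟨w, hw⟩ := ih (g • e) h2
      refine ⟨g⁻¹ * w, ?_⟩
      simpa [mul_inv_rev, mul_smul] using hw
  refine ⟨hFfin.toFinset, ?_⟩
  rintro e ⟨⟨k₁, -, k₂, -, hne⟩, hnot⟩
  have key : ∃ w : G, w⁻¹ • e ∈ D := by
    by_cases h1 : k₁ • v₀ (k₁⁻¹ • e) = v₀ e
    · exact good k₂ e (fun hc => hne (h1.trans hc.symm))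
    · exact good k₁ e h1
  obtain ⟨w, hw⟩ := key
  rcases hw with hw | hw
  · exact ⟨w, w⁻¹ • e, hFfin.mem_toFinset.2 hw, smul_inv_smul w e⟩
  · refine absurd ?_ hnot
    refine Set.mem_iUnion.2 ⟨w, ?_⟩
    exact ⟨w⁻¹ • e, hw, smul_inv_smul w e⟩
end

section
/- Existence of countably generated intermediate subgroups with disjointly translated supports. Let G be a group, and let E and Z be G-sets such that E is G-quasifree and some element of Map(E,Z) is stabilized by every element of G under the conjugation action. Let v₀ ∈ Map(E,Z) satisfy g·v₀ =ₐ v₀ for every g ∈ G. Let H ≤ K be subgroups of G such that: for each g ∈ G − H, (g·E_H) ∩ E_H = ∅; and rank(K rel H) < ω₀, i.e. there exists a finite subset S with Subgroup.closure (S ∪ H) = K. Then there exists a subgroup L of G with K ≤ L, such that rank(L rel H) ≤ ω₀ (there exists a countable subset S' with Subgroup.closure (S' ∪ H) = L) and, for each g ∈ G − L, (g·E_L) ∩ E_L = ∅. -/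
/-! Let `L` be generated over `H` by a countable `S`. Every point of `EK v₀ L` is an
`L`-translate of a point of `EK v₀ H` or of the countable set `F = ⋃ s ∈ S, diffSupport v₀ s`
(`diffSupport v₀ s` is the support of `s·v₀ - v₀`). As stabilisers are finite, only countably
many elements of `G` carry a point of `F` to a point of `F`; as the `G ∖ H`-translates of
`EK v₀ H` miss it, those carrying a point of `F` into `EK v₀ H` lie in countably many cosets
`H y`. Adjoining all these to `L` gives `L' ≥ L`, still countably generated over `H`, that
contains every `g` with `g • EK v₀ L ∩ EK v₀ L ≠ ∅`. Iterating `ω` times from `K`, the union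
of the chain has disjoint translates. -/

open Set Subgroup

lemma exists_seq_of_step {α : Type*} (P : α → Prop) (Q : α → α → Prop) {a : α} (ha : P a)
    (step : ∀ x, P x → ∃ y, P y ∧ Q x y) :
    ∃ f : ℕ → α, f 0 = a ∧ ∀ n, P (f n) ∧ Q (f n) (f (n + 1)) := by
  choose next hnext_P hnext_Q using step
  let f : ℕ → {x // P x} := fun n =>
    Nat.rec ⟨a, ha⟩ (fun _ x => ⟨next x.1 x.2, hnext_P _ _⟩) n
  exact ⟨fun n => (f n).1, rfl, fun n => ⟨(f n).2, hnext_Q _ _⟩⟩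

section

variable {G E Z : Type*} [Group G] [MulAction G E] [MulAction G Z]

def diffSupport (v₀ : E → Z) (g : G) : Set E := {e | g • v₀ (g⁻¹ • e) ≠ v₀ e}

def CountablyGeneratedOver (H L : Subgroup G) : Prop :=
  ∃ S : Set G, S.Countable ∧ closure (S ∪ (H : Set G)) = L

def HasDisjointTranslates (v₀ : E → Z) (L : Subgroup G) : Prop :=
  ∀ g : G, g ∉ L → ((fun x => g • x) '' EK v₀ (L : Set G)) ∩ EK v₀ (L : Set G) = ∅

lemma EK_mono (v₀ : E → Z) {K K' : Set G} (h : K ⊆ K') : EK v₀ K ⊆ EK v₀ K' :=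
  fun _ ⟨k₁, hk₁, k₂, hk₂, hne⟩ => ⟨k₁, h hk₁, k₂, h hk₂, hne⟩

lemma mem_EK_iff {v₀ : E → Z} {K : Subgroup G} {e : E} :
    e ∈ EK v₀ (K : Set G) ↔ ∃ k ∈ K, e ∈ diffSupport v₀ k := by
  constructor
  · rintro ⟨k₁, hk₁, k₂, hk₂, hne⟩
    by_contra! h
    exact hne ((not_not.mp (h k₁ hk₁)).trans (not_not.mp (h k₂ hk₂)).symm)
  · rintro ⟨k, hk, he⟩
    exact ⟨k, hk, 1, one_mem K, by simpa [diffSupport] using he⟩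

lemma EK_iSup_of_directed {ι : Type*} [Nonempty ι] (v₀ : E → Z) {K : ι → Subgroup G}
    (hK : Directed (· ≤ ·) K) :
    EK v₀ ((⨆ i, K i : Subgroup G) : Set G) = ⋃ i, EK v₀ (K i : Set G) := by
  ext e
  simp only [mem_iUnion, mem_EK_iff, mem_iSup_of_directed hK]
  exact ⟨fun ⟨k, ⟨i, hk⟩, he⟩ => ⟨i, k, hk, he⟩,
    fun ⟨i, k, hk, he⟩ => ⟨k, ⟨i, hk⟩, he⟩⟩

lemma smul_mem_diffSupport_of_mem_inv {v₀ : E → Z} {g : G} {e : E}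
    (he : e ∈ diffSupport v₀ g⁻¹) : g • e ∈ diffSupport v₀ g := by
  simp only [diffSupport, mem_ofPred_eq, inv_inv, inv_smul_smul] at he ⊢
  exact fun h => he (by rw [← h, inv_smul_smul])

lemma mem_diffSupport_or_of_mem_mul {v₀ : E → Z} {g h : G} {e : E}
    (he : e ∈ diffSupport v₀ (g * h)) :
    e ∈ diffSupport v₀ g ∨ g⁻¹ • e ∈ diffSupport v₀ h := by
  by_contra! hc
  simp only [diffSupport, mem_ofPred_eq, not_not] at hc
  exact he (by rw [mul_inv_rev, mul_smul, mul_smul, hc.2, hc.1])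

lemma exists_inv_smul_mem_of_mem_diffSupport {v₀ : E → Z} {T : Set G} {k : G}
    (hk : k ∈ closure T) {e : E} (he : e ∈ diffSupport v₀ k) :
    ∃ k₀ ∈ closure T, k₀⁻¹ • e ∈ ⋃ t ∈ T, diffSupport v₀ t := by
  induction hk using closure_induction generalizing e with
  | mem t ht => exact ⟨1, one_mem _, by simpa using mem_biUnion ht he⟩
  | one => simp [diffSupport] at he
  | mul x y hx _ ihx ihy =>
    rcases mem_diffSupport_or_of_mem_mul he with h | h
    · exact ihx h
    · obtain ⟨k₀, hk₀, hmem⟩ := ihy h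
      exact ⟨x * k₀, mul_mem hx hk₀, by rwa [mul_inv_rev, mul_smul]⟩
  | inv x hx ih =>
    obtain ⟨k₀, hk₀, hmem⟩ := ih (smul_mem_diffSupport_of_mem_inv he)
    exact ⟨x⁻¹ * k₀, mul_mem (inv_mem hx) hk₀, by rwa [mul_inv_rev, mul_smul, inv_inv]⟩

lemma finite_setOf_smul_eq (hE : ∀ e : E, {g : G | g • e = e}.Finite) (e e' : E) :
    {x : G | x • e = e'}.Finite := by
  rcases eq_empty_or_nonempty {x : G | x • e = e'} with h | ⟨x₀, hx₀⟩
  · simp [h]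
  · refine ((hE e).image (x₀ * ·)).subset fun x hx => ⟨x₀⁻¹ * x, ?_, by group⟩
    change (x₀⁻¹ * x) • e = e
    rw [mul_smul, hx, ← hx₀, inv_smul_smul]

lemma HasDisjointTranslates.mem_of_smul_mem {v₀ : E → Z} {L : Subgroup G}
    (hL : HasDisjointTranslates v₀ L) {g : G} {e : E} (he : e ∈ EK v₀ (L : Set G))
    (hge : g • e ∈ EK v₀ (L : Set G)) : g ∈ L := by
  by_contra hg
  exact (hL g hg).subset ⟨⟨e, he, rfl⟩, hge⟩

lemma hasDisjointTranslates_iff {v₀ : E → Z} {L : Subgroup G} :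
    HasDisjointTranslates v₀ L ↔
      ∀ g : G, ∀ e ∈ EK v₀ (L : Set G), g • e ∈ EK v₀ (L : Set G) → g ∈ L := by
  refine ⟨fun hL g e => hL.mem_of_smul_mem, fun h g hg => ?_⟩
  rw [eq_empty_iff_forall_notMem]
  rintro _ ⟨⟨e, he, rfl⟩, hge⟩
  exact hg (h g e he hge)

lemma CountablyGeneratedOver.iSup {ι : Type*} [Countable ι] [Nonempty ι] {H : Subgroup G}
    {K : ι → Subgroup G} (hK : ∀ i, CountablyGeneratedOver H (K i)) :
    CountablyGeneratedOver H (⨆ i, K i) := by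
  choose S hS_countable hS using hK
  refine ⟨⋃ i, S i, countable_iUnion hS_countable, ?_⟩
  rw [iUnion_union, Subgroup.closure_iUnion]
  exact iSup_congr hS

lemma exists_inv_smul_mem_of_mem_EK_closure {v₀ : E → Z} {H : Subgroup G} {S : Set G} {e : E}
    (he : e ∈ EK v₀ (closure (S ∪ (H : Set G)) : Set G)) :
    ∃ k ∈ closure (S ∪ (H : Set G)),
      k⁻¹ • e ∈ (⋃ s ∈ S, diffSupport v₀ s) ∪ EK v₀ (H : Set G) := by
  obtain ⟨k, hk, hek⟩ := mem_EK_iff.mp he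
  obtain ⟨k₀, hk₀, hmem⟩ := exists_inv_smul_mem_of_mem_diffSupport hk hek
  refine ⟨k₀, hk₀, ?_⟩
  rw [biUnion_union] at hmem
  rcases hmem with hmem | hmem
  · exact Or.inl hmem
  · obtain ⟨_, ⟨h, rfl⟩, _, ⟨hh, rfl⟩, hmem⟩ := hmem
    exact Or.inr (mem_EK_iff.mpr ⟨h, hh, hmem⟩)

lemma HasDisjointTranslates.exists_mul_inv_mem {v₀ : E → Z} {H : Subgroup G}
    (hH : HasDisjointTranslates v₀ H) (f : E) :
    ∃ y : G, ∀ x : G, x • f ∈ EK v₀ (H : Set G) → x * y⁻¹ ∈ H := by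
  by_cases hf : ∃ y : G, y • f ∈ EK v₀ (H : Set G)
  · obtain ⟨y, hy⟩ := hf
    exact ⟨y, fun x hx => hH.mem_of_smul_mem hy (by rwa [smul_smul, inv_mul_cancel_right])⟩
  · exact ⟨1, fun x hx => (hf ⟨x, hx⟩).elim⟩

lemma HasDisjointTranslates.exists_countable_of_smul_mem {v₀ : E → Z} {H : Subgroup G}
    (hE : ∀ e : E, {g : G | g • e = e}.Finite) (hH : HasDisjointTranslates v₀ H) {F : Set E}
    (hF : F.Countable) :
    ∃ R : Set G, R.Countable ∧ ∀ x : G, ∀ a ∈ F ∪ EK v₀ (H : Set G),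
      x • a ∈ F ∪ EK v₀ (H : Set G) → x ∈ closure (R ∪ (H : Set G)) := by
  choose y hy using hH.exists_mul_inv_mem
  set R : Set G := (⋃ f ∈ F, ⋃ f' ∈ F, {x : G | x • f = f'}) ∪ y '' F
  have hR_countable : R.Countable :=
    (hF.biUnion fun f _ => hF.biUnion fun f' _ => (finite_setOf_smul_eq hE f f').countable).union
      (hF.image y)
  refine ⟨R, hR_countable, ?_⟩
  have hR : ∀ {x}, x ∈ R → x ∈ closure (R ∪ (H : Set G)) :=
    fun hx => subset_closure (Or.inl hx)
  have hH_le : ∀ {h}, h ∈ H → h ∈ closure (R ∪ (H : Set G)) :=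
    fun hh => subset_closure (Or.inr hh)
  have hF_to_EK : ∀ {x a}, a ∈ F → x • a ∈ EK v₀ (H : Set G) →
      x ∈ closure (R ∪ (H : Set G)) :=
    fun {x a} ha hxa => by simpa using mul_mem (hH_le (hy a x hxa)) (hR (Or.inr ⟨a, ha, rfl⟩))
  rintro x a (ha | ha) (hxa | hxa)
  · exact hR (Or.inl (mem_biUnion ha (mem_biUnion hxa rfl)))
  · exact hF_to_EK ha hxa
  · exact inv_inv x ▸ inv_mem (hF_to_EK hxa (by rwa [inv_smul_smul]))
  · exact hH_le (hH.mem_of_smul_mem ha hxa)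

lemma HasDisjointTranslates.exists_countablyGeneratedOver_absorbing {v₀ : E → Z}
    {H : Subgroup G} (hE : ∀ e : E, {g : G | g • e = e}.Finite)
    (hv₀ : ∀ g : G, (diffSupport v₀ g).Finite) (hH : HasDisjointTranslates v₀ H)
    {L : Subgroup G} (hL : CountablyGeneratedOver H L) :
    ∃ L' : Subgroup G, CountablyGeneratedOver H L' ∧ L ≤ L' ∧
      ∀ g : G, ∀ e ∈ EK v₀ (L : Set G), g • e ∈ EK v₀ (L : Set G) → g ∈ L' := by
  obtain ⟨S, hS_countable, rfl⟩ := hL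
  obtain ⟨R, hR_countable, hR⟩ := hH.exists_countable_of_smul_mem hE
    (hS_countable.biUnion fun s _ => (hv₀ s).countable)
  have hSL : closure (S ∪ (H : Set G)) ≤ closure ((R ∪ S) ∪ (H : Set G)) :=
    closure_mono (union_subset_union_left _ subset_union_right)
  have hRL : closure (R ∪ (H : Set G)) ≤ closure ((R ∪ S) ∪ (H : Set G)) :=
    closure_mono (union_subset_union_left _ subset_union_left)
  refine ⟨_, ⟨R ∪ S, hR_countable.union hS_countable, rfl⟩, hSL, fun g e he hge => ?_⟩
  obtain ⟨k₁, hk₁, ha₁⟩ := exists_inv_smul_mem_of_mem_EK_closure he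
  obtain ⟨k₂, hk₂, ha₂⟩ := exists_inv_smul_mem_of_mem_EK_closure hge
  have hx : k₂⁻¹ * g * k₁ ∈ closure (R ∪ (H : Set G)) :=
    hR _ _ ha₁ (by rwa [mul_smul, smul_inv_smul, mul_smul])
  have hg : g = k₂ * (k₂⁻¹ * g * k₁) * k₁⁻¹ := by group
  rw [hg]
  exact mul_mem (mul_mem (hSL hk₂) (hRL hx)) (inv_mem (hSL hk₁))

end

theorem exists_countably_generated_intermediate_general
    {G E Z : Type*} [Group G] [MulAction G E] [MulAction G Z]
    (hE : ∀ e : E, {g : G | g • e = e}.Finite)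
    (v₀ : E → Z)
    (hv₀ : ∀ g : G, {e : E | g • v₀ (g⁻¹ • e) ≠ v₀ e}.Finite)
    (H K : Subgroup G)
    (hdisj : ∀ g : G, g ∉ H →
      ((fun x => g • x) '' EK v₀ (H : Set G)) ∩ EK v₀ (H : Set G) = ∅)
    (hfg : ∃ S : Finset G, Subgroup.closure (↑S ∪ (H : Set G)) = K) :
    ∃ L : Subgroup G, K ≤ L ∧
      (∃ S' : Set G, S'.Countable ∧ Subgroup.closure (S' ∪ (H : Set G)) = L) ∧
      ∀ g : G, g ∉ L →
        ((fun x => g • x) '' EK v₀ (L : Set G)) ∩ EK v₀ (L : Set G) = ∅ := by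
  obtain ⟨S, hS⟩ := hfg
  obtain ⟨L, rfl, hL⟩ := exists_seq_of_step (CountablyGeneratedOver H)
    (fun L L' => L ≤ L' ∧
      ∀ g : G, ∀ e ∈ EK v₀ (L : Set G), g • e ∈ EK v₀ (L : Set G) → g ∈ L')
    ⟨S, S.countable_toSet, hS⟩
    fun _ hL => HasDisjointTranslates.exists_countablyGeneratedOver_absorbing hE hv₀ hdisj hL
  have hmono : Monotone L := monotone_nat_of_le_succ fun n => (hL n).2.1
  refine ⟨⨆ n, L n, le_iSup L 0, CountablyGeneratedOver.iSup fun n => (hL n).1, ?_⟩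
  refine hasDisjointTranslates_iff.mpr fun g e he hge => ?_
  rw [EK_iSup_of_directed v₀ hmono.directed_le, mem_iUnion] at he hge
  obtain ⟨m, hm⟩ := he
  obtain ⟨n, hn⟩ := hge
  have hmn : ∀ {i}, i ≤ max m n → EK v₀ (L i : Set G) ⊆ EK v₀ (L (max m n) : Set G) :=
    fun hi => EK_mono v₀ (hmono hi)
  exact le_iSup L _
    ((hL (max m n)).2.2 g e (hmn (le_max_left m n) hm) (hmn (le_max_right m n) hn))

/-- **Existence of countably generated intermediate subgroups with disjointly
translated supports.** -/
theorem exists_countably_generated_intermediate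
    {G E Z : Type*} [Group G] [MulAction G E] [MulAction G Z]
    (hE : ∀ e : E, {g : G | g • e = e}.Finite)
    (hmap : ∃ u : E → Z, ∀ (g : G) (e : E), g • u (g⁻¹ • e) = u e)
    (v₀ : E → Z)
    (hv₀ : ∀ g : G, {e : E | g • v₀ (g⁻¹ • e) ≠ v₀ e}.Finite)
    (H K : Subgroup G) (hHK : H ≤ K)
    (hdisj : ∀ g : G, g ∉ H →
      ((fun x => g • x) '' EK v₀ (H : Set G)) ∩ EK v₀ (H : Set G) = ∅)
    (hfg : ∃ S : Finset G, Subgroup.closure (↑S ∪ (H : Set G)) = K) :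
    ∃ L : Subgroup G, K ≤ L ∧
      (∃ S' : Set G, S'.Countable ∧ Subgroup.closure (S' ∪ (H : Set G)) = L) ∧
      ∀ g : G, g ∉ L →
        ((fun x => g • x) '' EK v₀ (L : Set G)) ∩ EK v₀ (L : Set G) = ∅ :=
  exists_countably_generated_intermediate_general hE v₀ hv₀ H K hdisj hfg
end

section
/- Finite subgroups stabilize elements of the almost equality class. Let G be a group, and let E and Z be G-sets such that some element of Map(E,Z) is stabilized by every element of G under the conjugation action. Let v₀ ∈ Map(E,Z) satisfy g·v₀ =ₐ v₀ for every g ∈ G. Then for every finite subgroup H of G there exists w ∈ Map(E,Z) with w =ₐ v₀ and h·w = w for all h ∈ H. -/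
/-- **Finite subgroups stabilize elements of the almost equality class.** -/
theorem finite_subgroup_stabilizes
    {G E Z : Type*} [Group G] [MulAction G E] [MulAction G Z]
    (hmap : ∃ u : E → Z, ∀ (g : G) (e : E), g • u (g⁻¹ • e) = u e)
    (v₀ : E → Z)
    (hv₀ : ∀ g : G, {e : E | g • v₀ (g⁻¹ • e) ≠ v₀ e}.Finite) :
    ∀ H : Subgroup G, (H : Set G).Finite →
      ∃ w : E → Z, {e : E | w e ≠ v₀ e}.Finite ∧
        ∀ h ∈ H, (fun e => h • w (h⁻¹ • e)) = w := by
  obtain ⟨u, hu⟩ := hmap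
  intro H hH
  classical
  set B : Set E := {e | ∃ k ∈ H, k • v₀ (k⁻¹ • e) ≠ v₀ e} with hBdef
  have hBfin : B.Finite := by
    apply (hH.biUnion (fun k _ => hv₀ k)).subset
    rintro e ⟨k, hk, hne⟩
    exact Set.mem_biUnion hk hne
  have hnot : ∀ e : E, e ∉ B → ∀ k ∈ H, k • v₀ (k⁻¹ • e) = v₀ e := by
    intro e he k hk
    by_contra hne
    exact he ⟨k, hk, hne⟩
  have key : ∀ h ∈ H, ∀ e : E, e ∉ B → (h⁻¹ • e) ∉ B := by
    intro h hh e he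
    rintro ⟨k, hk, hne⟩
    apply hne
    have h1 : (h * k) • v₀ ((h * k)⁻¹ • e) = v₀ e := hnot e he _ (H.mul_mem hh hk)
    have h2 : h • v₀ (h⁻¹ • e) = v₀ e := hnot e he h hh
    have h3 : (h * k)⁻¹ • e = k⁻¹ • h⁻¹ • e := by
      rw [mul_inv_rev, mul_smul]
    rw [h3, mul_smul] at h1
    calc k • v₀ (k⁻¹ • h⁻¹ • e) = h⁻¹ • h • k • v₀ (k⁻¹ • h⁻¹ • e) := by
          rw [inv_smul_smul]
      _ = h⁻¹ • v₀ e := by rw [h1]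
      _ = h⁻¹ • h • v₀ (h⁻¹ • e) := by rw [h2]
      _ = v₀ (h⁻¹ • e) := by rw [inv_smul_smul]
  refine ⟨fun e => if e ∈ B then u e else v₀ e, ?_, ?_⟩
  · apply hBfin.subset
    intro e he
    by_contra hB
    simp only [Set.mem_setOf_eq, if_neg hB] at he
    exact he rfl
  · intro h hh
    funext e
    by_cases heB : e ∈ B
    · have h1 : h⁻¹ • e ∈ B := by
        by_contra hc
        have := key h⁻¹ (H.inv_mem hh) _ hc
        rw [inv_inv, smul_inv_smul] at this
        exact this heB
      simp only [if_pos heB, if_pos h1]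
      exact hu h e
    · have h1 : h⁻¹ • e ∉ B := key h hh e heB
      simp only [if_neg heB, if_neg h1]
      exact hnot e heB h hh
end

section
/- Quasifreeness of the edge set of the complete graph on an almost equality class. Let G be a group, and let E and Z be G-sets with E G-quasifree. Let v, w ∈ Map(E,Z) be such that v =ₐ w and v ≠ w. Then the set {g ∈ G : g·v = v and g·w = w} is finite; in particular, the edge G-set of the complete graph on any almost equality class in Map(E,Z) is G-quasifree. -/
/-- **Quasifreeness of the edge set of the complete graph on an almost equality
class:** if `E` is `G`-quasifree and `v =ₐ w` with `v ≠ w`, then the simultaneous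
stabilizer of `v` and `w` under the conjugation action is finite. -/
theorem edge_stabilizer_finite
    {G E Z : Type*} [Group G] [MulAction G E] [MulAction G Z]
    (hE : ∀ e : E, {g : G | g • e = e}.Finite)
    (v w : E → Z)
    (hae : {e : E | v e ≠ w e}.Finite)
    (hne : v ≠ w) :
    {g : G | (fun e => g • v (g⁻¹ • e)) = v ∧ (fun e => g • w (g⁻¹ • e)) = w}.Finite := by
  obtain ⟨e₀, he₀⟩ := Function.ne_iff.mp hne
  have hT : ∀ d : E, {g : G | g • d = e₀}.Finite := by
    intro d
    rcases Set.eq_empty_or_nonempty {g : G | g • d = e₀} with h | ⟨g₀, hg₀⟩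
    · simp [h]
    · refine ((hE d).image (g₀ * ·)).subset ?_
      intro g hg
      refine ⟨g₀⁻¹ * g, ?_, by group⟩
      simp only [Set.mem_setOf_eq] at hg hg₀ ⊢
      rw [mul_smul, hg, ← hg₀, inv_smul_smul]
  refine (Set.Finite.biUnion hae fun d _ => hT d).subset ?_
  rintro g ⟨hv, hw⟩
  have hv' := congrFun hv e₀
  have hw' := congrFun hw e₀
  have hd : g⁻¹ • e₀ ∈ {e : E | v e ≠ w e} := by
    simp only [Set.mem_setOf_eq]
    intro h
    apply he₀
    rw [← hv', ← hw', h]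
  exact Set.mem_biUnion hd (by simp)
end
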